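/- arXiv:2307.11987 — 10 statements merged into one kernel-verified Lean document; each statement's English description precedes it below -/
import Mathlib

section
/- Enhanced discrete comparison principle: let Λ ⊆ {1,…,N} be an arbitrary subset and Z ∈ ℝ^N. If (L Z)_i ≥ 0 for every i ∈ Λ and Z_i ≥ 0 for every i ∉ Λ, then Z_i ≥ 0 for every i ∈ {1,…,N}. -/
/-- **Enhanced discrete comparison principle.**
`L` is an `N × N` real matrix with positive diagonal, nonpositive off-diagonal entries,
and strict diagonal dominance. If `(L Z)_i ≥ 0` for every `i` in an arbitrary subset `Λ`
and `Z_i ≥ 0` for every `i ∉ Λ`, then `Z_i ≥ 0` for every `i`. -/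
theorem enhanced_discrete_comparison_principle
    (N : ℕ) (hN : 0 < N) (L : Matrix (Fin N) (Fin N) ℝ)
    (hdiag : ∀ i, 0 < L i i)
    (hoff : ∀ i j, i ≠ j → L i j ≤ 0)
    (hdom : ∀ i, ∑ j ∈ Finset.univ.erase i, |L i j| < L i i)
    (Λ : Set (Fin N)) (Z : Fin N → ℝ)
    (hΛ : ∀ i ∈ Λ, 0 ≤ ∑ j, L i j * Z j)
    (hco : ∀ i ∉ Λ, 0 ≤ Z i) :
    ∀ i, 0 ≤ Z i := by
  -- let i0 minimize Z
  haveI : Nonempty (Fin N) := ⟨⟨0, hN⟩⟩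
  obtain ⟨i0, -, hmin⟩ := Finset.exists_min_image Finset.univ Z ⟨⟨0, hN⟩, Finset.mem_univ _⟩
  intro i
  have hmin' : ∀ j, Z i0 ≤ Z j := fun j => hmin j (Finset.mem_univ j)
  suffices h : 0 ≤ Z i0 from le_trans h (hmin' i)
  by_contra hneg
  push_neg at hneg
  have hi0Λ : i0 ∈ Λ := by
    by_contra h
    exact absurd (hco i0 h) (not_le.mpr hneg)
  have key : ∑ j, L i0 j * Z j < 0 := by
    have h1 : ∑ j, L i0 j * Z j ≤ ∑ j, L i0 j * Z i0 := by
      apply Finset.sum_le_sum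
      intro j _
      by_cases hj : j = i0
      · rw [hj]
      · have h0 := hoff i0 j (Ne.symm hj)
        nlinarith [hmin' j]
    have h2 : ∑ j, L i0 j * Z i0 = (∑ j, L i0 j) * Z i0 := by
      rw [Finset.sum_mul]
    have h3 : 0 < ∑ j, L i0 j := by
      have := hdom i0
      have habs : ∑ j ∈ Finset.univ.erase i0, |L i0 j| =
          -(∑ j ∈ Finset.univ.erase i0, L i0 j) := by
        rw [← Finset.sum_neg_distrib]
        apply Finset.sum_congr rfl
        intro j hj
        exact abs_of_nonpos (hoff i0 j (Ne.symm (Finset.ne_of_mem_erase hj)))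
      rw [habs] at this
      have hsplit : ∑ j, L i0 j = L i0 i0 + ∑ j ∈ Finset.univ.erase i0, L i0 j := by
        rw [← Finset.add_sum_erase _ _ (Finset.mem_univ i0)]
      rw [hsplit]; linarith
    calc ∑ j, L i0 j * Z j ≤ (∑ j, L i0 j) * Z i0 := by rw [← h2]; exact h1
    _ < 0 := mul_neg_of_pos_of_neg h3 hneg
  exact absurd (hΛ i0 hi0Λ) (not_le.mpr key)
end

section
/- Discrete comparison principle for the discrete obstacle operator: for arbitrary f, ψ ∈ ℝ^N, if v, w ∈ ℝ^N satisfy G(v)_i ≥ G(w)_i for every i ∈ {1,…,N}, then v_i ≥ w_i for every i. -/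
/-- **Discrete comparison principle for the discrete obstacle operator**
`G(v)_i := min((L v)_i − f_i, v_i − ψ_i)`: if `G(v)_i ≥ G(w)_i` for every `i`,
then `v_i ≥ w_i` for every `i`. -/
theorem discrete_comparison_principle_G
    (N : ℕ) (hN : 0 < N) (L : Matrix (Fin N) (Fin N) ℝ)
    (hdiag : ∀ i, 0 < L i i)
    (hoff : ∀ i j, i ≠ j → L i j ≤ 0)
    (hdom : ∀ i, ∑ j ∈ Finset.univ.erase i, |L i j| < L i i)
    (f ψ : Fin N → ℝ) (v w : Fin N → ℝ)
    (hG : ∀ i, min ((∑ j, L i j * w j) - f i) (w i - ψ i)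
            ≤ min ((∑ j, L i j * v j) - f i) (v i - ψ i)) :
    ∀ i, w i ≤ v i := by
  by_contra h
  push_neg at h
  obtain ⟨k, hk⟩ := h
  obtain ⟨i0, -, hmax⟩ := Finset.exists_max_image Finset.univ (fun i => w i - v i)
    ⟨k, Finset.mem_univ k⟩
  have ht : 0 < w i0 - v i0 := lt_of_lt_of_le (by linarith) (hmax k (Finset.mem_univ k))
  have key : ∀ j ∈ Finset.univ.erase i0,
      -|L i0 j| * (w i0 - v i0) ≤ L i0 j * (w j - v j) := by
    intro j hj
    have hne : j ≠ i0 := Finset.ne_of_mem_erase hj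
    have hL : L i0 j ≤ 0 := hoff i0 j (Ne.symm hne)
    have habs : |L i0 j| = -L i0 j := abs_of_nonpos hL
    have huj : w j - v j ≤ w i0 - v i0 := hmax j (Finset.mem_univ j)
    rw [habs]
    nlinarith
  have h1 : ∑ j ∈ Finset.univ.erase i0, (-|L i0 j| * (w i0 - v i0)) ≤
      ∑ j ∈ Finset.univ.erase i0, L i0 j * (w j - v j) := Finset.sum_le_sum key
  have h2 : ∑ j, L i0 j * (w j - v j) =
      L i0 i0 * (w i0 - v i0) + ∑ j ∈ Finset.univ.erase i0, L i0 j * (w j - v j) :=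
    (Finset.add_sum_erase _ _ (Finset.mem_univ i0)).symm
  have h3 : ∑ j ∈ Finset.univ.erase i0, (-|L i0 j| * (w i0 - v i0)) =
      -(∑ j ∈ Finset.univ.erase i0, |L i0 j|) * (w i0 - v i0) := by
    rw [← Finset.sum_neg_distrib, Finset.sum_mul]
  have hd := hdom i0
  have hpos : 0 < ∑ j, L i0 j * (w j - v j) := by
    rw [h2]; rw [h3] at h1; nlinarith
  have hsplit : ∑ j, L i0 j * (w j - v j) =
      (∑ j, L i0 j * w j) - ∑ j, L i0 j * v j := by
    rw [← Finset.sum_sub_distrib]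
    exact Finset.sum_congr rfl (fun j _ => by ring)
  rw [hsplit] at hpos
  have hgi := hG i0
  have hlt : min ((∑ j, L i0 j * v j) - f i0) (v i0 - ψ i0) <
      min ((∑ j, L i0 j * w j) - f i0) (w i0 - ψ i0) :=
    lt_min ((min_le_left _ _).trans_lt (by linarith))
      ((min_le_right _ _).trans_lt (by linarith))
  linarith
end

section
/- Uniqueness of the discrete solution: for arbitrary f, ψ ∈ ℝ^N, if u, u' ∈ ℝ^N both satisfy G(u)_i = 0 and G(u')_i = 0 for every i ∈ {1,…,N}, then u = u'. -/
lemma discrete_obstacle_le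
    (N : ℕ) (L : Matrix (Fin N) (Fin N) ℝ)
    (hoff : ∀ i j, i ≠ j → L i j ≤ 0)
    (hdom : ∀ i, ∑ j ∈ Finset.univ.erase i, |L i j| < L i i)
    (f ψ : Fin N → ℝ) (u u' : Fin N → ℝ)
    (hu : ∀ i, min ((∑ j, L i j * u j) - f i) (u i - ψ i) = 0)
    (hu' : ∀ i, min ((∑ j, L i j * u' j) - f i) (u' i - ψ i) = 0) :
    ∀ i, u i ≤ u' i := by
  by_contra h
  push_neg at h
  obtain ⟨k, hk⟩ := h
  obtain ⟨i₀, -, hi₀⟩ := Finset.exists_max_image Finset.univ (fun i => u i - u' i)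
    ⟨k, Finset.mem_univ k⟩
  have hw : 0 < u i₀ - u' i₀ :=
    lt_of_lt_of_le (by linarith) (hi₀ k (Finset.mem_univ k))
  have h1 : 0 ≤ u' i₀ - ψ i₀ := by
    have := min_le_right ((∑ j, L i₀ j * u' j) - f i₀) (u' i₀ - ψ i₀)
    linarith [hu' i₀]
  have h2 : 0 < u i₀ - ψ i₀ := by linarith
  have h3 : (∑ j, L i₀ j * u j) - f i₀ = 0 := by
    rcases min_cases ((∑ j, L i₀ j * u j) - f i₀) (u i₀ - ψ i₀) with ⟨hm, _⟩ | ⟨hm, _⟩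
    · linarith [hu i₀]
    · linarith [hu i₀]
  have h4 : 0 ≤ (∑ j, L i₀ j * u' j) - f i₀ := by
    have := min_le_left ((∑ j, L i₀ j * u' j) - f i₀) (u' i₀ - ψ i₀)
    linarith [hu' i₀]
  have h5 : ∑ j, L i₀ j * (u j - u' j) ≤ 0 := by
    have heq : ∑ j, L i₀ j * (u j - u' j)
        = (∑ j, L i₀ j * u j) - ∑ j, L i₀ j * u' j := by
      rw [← Finset.sum_sub_distrib]
      exact Finset.sum_congr rfl fun j _ => by ring
    rw [heq]; linarith
  have h6 : ∀ j ∈ Finset.univ.erase i₀,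
      -(|L i₀ j|) * (u i₀ - u' i₀) ≤ L i₀ j * (u j - u' j) := by
    intro j hj
    have hne : j ≠ i₀ := Finset.ne_of_mem_erase hj
    have hL : L i₀ j ≤ 0 := hoff i₀ j (Ne.symm hne)
    have habs : |L i₀ j| = -(L i₀ j) := abs_of_nonpos hL
    have hwj : u j - u' j ≤ u i₀ - u' i₀ := hi₀ j (Finset.mem_univ j)
    rw [habs]
    nlinarith [mul_nonneg (neg_nonneg.mpr hL) (sub_nonneg.mpr hwj)]
  have h7 : ∑ j ∈ Finset.univ.erase i₀, -(|L i₀ j|) * (u i₀ - u' i₀)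
      ≤ ∑ j ∈ Finset.univ.erase i₀, L i₀ j * (u j - u' j) :=
    Finset.sum_le_sum h6
  have hsplit : ∑ j, L i₀ j * (u j - u' j)
      = L i₀ i₀ * (u i₀ - u' i₀)
        + ∑ j ∈ Finset.univ.erase i₀, L i₀ j * (u j - u' j) :=
    (Finset.add_sum_erase _ _ (Finset.mem_univ i₀)).symm
  have h8 : ∑ j ∈ Finset.univ.erase i₀, -(|L i₀ j|) * (u i₀ - u' i₀)
      = -(∑ j ∈ Finset.univ.erase i₀, |L i₀ j|) * (u i₀ - u' i₀) := by
    rw [← Finset.sum_mul, Finset.sum_neg_distrib]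
  rw [h8] at h7
  nlinarith [mul_pos (sub_pos.mpr (hdom i₀)) hw]

/-- **Uniqueness of the discrete solution** of the discrete obstacle problem
`G(u)_i = min((L u)_i − f_i, u_i − ψ_i) = 0`. -/
theorem discrete_solution_unique
    (N : ℕ) (hN : 0 < N) (L : Matrix (Fin N) (Fin N) ℝ)
    (hdiag : ∀ i, 0 < L i i)
    (hoff : ∀ i j, i ≠ j → L i j ≤ 0)
    (hdom : ∀ i, ∑ j ∈ Finset.univ.erase i, |L i j| < L i i)
    (f ψ : Fin N → ℝ) (u u' : Fin N → ℝ)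
    (hu : ∀ i, min ((∑ j, L i j * u j) - f i) (u i - ψ i) = 0)
    (hu' : ∀ i, min ((∑ j, L i j * u' j) - f i) (u' i - ψ i) = 0) :
    u = u' := by
  funext i
  exact le_antisymm (discrete_obstacle_le N L hoff hdom f ψ u u' hu hu' i)
    (discrete_obstacle_le N L hoff hdom f ψ u' u hu' hu i)
end

section
/- Existence and stability of the discrete solution: let c := min_i ∑_j L i j (which is positive by strict diagonal dominance and the sign conditions). For arbitrary f, ψ ∈ ℝ^N there exists a unique u ∈ ℝ^N with G(u)_i = 0 for every i ∈ {1,…,N}, and this solution satisfies ψ_i ≤ u_i for every i and ‖u‖_∞ ≤ max(‖ψ‖_∞, c⁻¹ ‖f‖_∞). -/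
open Finset

private lemma min_eq_zero_iff_max' {d x a b : ℝ} (hd : 0 < d) :
    min (d * (x - a)) (x - b) = 0 ↔ x = max b a := by
  constructor
  · intro h
    rcases min_eq_iff.1 h with ⟨h1, h2⟩ | ⟨h1, h2⟩
    · have hxa : x = a := by
        rcases mul_eq_zero.1 h1 with h | h
        · exact absurd h hd.ne'
        · linarith
      subst hxa
      rw [h1] at h2
      rw [max_eq_right (by linarith)]
    · have hxb : x = b := by linarith
      subst hxb
      rw [h1] at h2
      have hax : a ≤ x := by nlinarith
      rw [max_eq_left hax]
  · intro h
    rcases le_total b a with hba | hab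
    · rw [max_eq_right hba] at h
      subst h
      rw [sub_self, mul_zero]
      exact min_eq_left (by linarith)
    · rw [max_eq_left hab] at h
      subst h
      rw [sub_self]
      exact min_eq_right (mul_nonneg hd.le (by linarith))

/-- **Existence and stability of the discrete solution.** With
`c := min_i ∑_j L i j`, for arbitrary `f, ψ` there exists a unique `u` with
`G(u)_i = 0` for every `i`, satisfying `ψ_i ≤ u_i` for every `i` and
`‖u‖_∞ ≤ max(‖ψ‖_∞, c⁻¹ ‖f‖_∞)`. -/
theorem discrete_solution_existence_stability
    (N : ℕ) (hN : 0 < N) (L : Matrix (Fin N) (Fin N) ℝ)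
    (hdiag : ∀ i, 0 < L i i)
    (hoff : ∀ i j, i ≠ j → L i j ≤ 0)
    (hdom : ∀ i, ∑ j ∈ Finset.univ.erase i, |L i j| < L i i)
    (f ψ : Fin N → ℝ) (c : ℝ)
    (hc : c = Finset.univ.inf' ⟨⟨0, hN⟩, Finset.mem_univ _⟩ (fun i => ∑ j, L i j)) :
    ∃ u : Fin N → ℝ,
      (∀ i, min ((∑ j, L i j * u j) - f i) (u i - ψ i) = 0) ∧
      (∀ i, ψ i ≤ u i) ∧
      (Finset.univ.sup' ⟨⟨0, hN⟩, Finset.mem_univ _⟩ (fun i => |u i|)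
        ≤ max (Finset.univ.sup' ⟨⟨0, hN⟩, Finset.mem_univ _⟩ (fun i => |ψ i|))
            (c⁻¹ * Finset.univ.sup' ⟨⟨0, hN⟩, Finset.mem_univ _⟩ (fun i => |f i|))) ∧
      (∀ u' : Fin N → ℝ,
        (∀ i, min ((∑ j, L i j * u' j) - f i) (u' i - ψ i) = 0) → u' = u) := by
  classical
  have hne : (Finset.univ : Finset (Fin N)).Nonempty := ⟨⟨0, hN⟩, mem_univ _⟩
  set a : (Fin N → ℝ) → Fin N → ℝ :=
    fun v i => (f i - ∑ j ∈ univ.erase i, L i j * v j) / L i i with ha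
  set T : (Fin N → ℝ) → Fin N → ℝ := fun v i => max (ψ i) (a v i) with hT
  have hsum : ∀ (v : Fin N → ℝ) (i : Fin N), ∑ j, L i j * v j
      = L i i * v i + ∑ j ∈ univ.erase i, L i j * v j := by
    intro v i
    exact (Finset.add_sum_erase _ (fun j => L i j * v j) (mem_univ i)).symm
  have hequiv : ∀ (v : Fin N → ℝ) (i : Fin N),
      (min ((∑ j, L i j * v j) - f i) (v i - ψ i) = 0) ↔ v i = T v i := by
    intro v i
    have h1 : (∑ j, L i j * v j) - f i = L i i * (v i - a v i) := by
      rw [hsum]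
      simp only [ha]
      field_simp [(hdiag i).ne']
      ring
    rw [h1]
    exact min_eq_zero_iff_max' (hdiag i)
  -- contraction constant
  set k : ℝ := univ.sup' hne (fun i => (∑ j ∈ univ.erase i, |L i j|) / L i i) with hk
  have hkmem : ∀ i : Fin N, (∑ j ∈ univ.erase i, |L i j|) / L i i ≤ k := by
    intro i
    rw [hk]
    exact Finset.le_sup' (fun i => (∑ j ∈ univ.erase i, |L i j|) / L i i) (mem_univ i)
  have hk0 : 0 ≤ k :=
    le_trans (div_nonneg (Finset.sum_nonneg fun j _ => abs_nonneg _) (hdiag _).le)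
      (hkmem ⟨0, hN⟩)
  have hk1 : k < 1 := by
    rw [hk, Finset.sup'_lt_iff]
    intro i _
    rw [div_lt_one (hdiag i)]
    exact hdom i
  have hlip : ∀ v w : Fin N → ℝ, dist (T v) (T w) ≤ k * dist v w := by
    intro v w
    rw [dist_pi_le_iff (by positivity)]
    intro i
    have hdiff : a v i - a w i = (∑ j ∈ univ.erase i, L i j * (w j - v j)) / L i i := by
      simp only [ha, div_sub_div_same]
      congr 1
      rw [Finset.sum_congr rfl (fun j _ => mul_sub (L i j) (w j) (v j)),
        Finset.sum_sub_distrib]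
      ring
    have h2 : dist (T v i) (T w i) ≤ |a v i - a w i| := by
      simp only [hT, Real.dist_eq]
      rw [max_comm (ψ i) (a v i), max_comm (ψ i) (a w i)]
      exact abs_max_sub_max_le_abs _ _ _
    have h3 : |a v i - a w i| ≤ ((∑ j ∈ univ.erase i, |L i j|) / L i i) * dist v w := by
      rw [hdiff, abs_div, abs_of_pos (hdiag i), div_mul_eq_mul_div,
        div_le_div_iff_of_pos_right (hdiag i)]
      calc |∑ j ∈ univ.erase i, L i j * (w j - v j)|
          ≤ ∑ j ∈ univ.erase i, |L i j * (w j - v j)| := Finset.abs_sum_le_sum_abs _ _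
        _ ≤ ∑ j ∈ univ.erase i, |L i j| * dist v w := by
            refine Finset.sum_le_sum fun j _ => ?_
            rw [abs_mul]
            refine mul_le_mul_of_nonneg_left ?_ (abs_nonneg _)
            rw [← Real.dist_eq, dist_comm]
            exact dist_le_pi_dist v w j
        _ = (∑ j ∈ univ.erase i, |L i j|) * dist v w := by rw [Finset.sum_mul]
    refine (h2.trans h3).trans ?_
    exact mul_le_mul_of_nonneg_right (hkmem i) dist_nonneg
  set K : NNReal := ⟨k, hk0⟩ with hK
  have hcontr : ContractingWith K T := by
    constructor
    · rw [← NNReal.coe_lt_coe, NNReal.coe_one]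
      exact hk1
    · exact LipschitzWith.of_dist_le_mul hlip
  set u : Fin N → ℝ := ContractingWith.fixedPoint T hcontr with hu
  have hfix : T u = u := hcontr.fixedPoint_isFixedPt
  have hueq : ∀ i, min ((∑ j, L i j * u j) - f i) (u i - ψ i) = 0 := by
    intro i
    exact (hequiv u i).2 (congrFun hfix i).symm
  have hψu : ∀ i, ψ i ≤ u i := by
    intro i
    rw [← congrFun hfix i]
    exact le_max_left _ _
  -- positivity of c
  have hrow : ∀ i, 0 < ∑ j, L i j := by
    intro i
    have h2 : ∑ j ∈ univ.erase i, L i j = -∑ j ∈ univ.erase i, |L i j| := by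
      rw [← Finset.sum_neg_distrib]
      refine Finset.sum_congr rfl fun j hj => ?_
      rw [abs_of_nonpos (hoff i j (Ne.symm (mem_erase.1 hj).1))]
      ring
    have := hsum (fun _ => (1 : ℝ)) i
    simp only [mul_one] at this
    rw [this, h2]
    linarith [hdom i]
  have hcpos : 0 < c := by
    rw [hc]; refine (Finset.lt_inf'_iff _).2 ?_
    exact fun i _ => hrow i
  set Mψ : ℝ := univ.sup' hne (fun i => |ψ i|) with hMψ
  set Mf : ℝ := univ.sup' hne (fun i => |f i|) with hMf
  have hMψle' : ∀ i, |ψ i| ≤ Mψ := fun i => by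
    rw [hMψ]; exact Finset.le_sup' (fun i => |ψ i|) (mem_univ i)
  have hMfle' : ∀ i, |f i| ≤ Mf := fun i => by
    rw [hMf]; exact Finset.le_sup' (fun i => |f i|) (mem_univ i)
  have hMψ0 : 0 ≤ Mψ := (abs_nonneg _).trans (hMψle' ⟨0, hN⟩)
  have hMf0 : 0 ≤ Mf := (abs_nonneg _).trans (hMfle' ⟨0, hN⟩)
  set M : ℝ := max Mψ (c⁻¹ * Mf) with hM
  have hMψle : Mψ ≤ M := le_max_left _ _
  have hMfle : c⁻¹ * Mf ≤ M := le_max_right _ _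
  have hlow : ∀ i, -M ≤ u i := by
    intro i
    have h1 : |ψ i| ≤ Mψ := hMψle' i
    have := hψu i
    have := abs_le.1 h1
    linarith
  obtain ⟨i0, -, hi0⟩ := Finset.exists_max_image univ u hne
  have hupmax : u i0 ≤ M := by
    have hfixi : u i0 = max (ψ i0) (a u i0) := (congrFun hfix i0).symm
    rcases le_total (a u i0) (ψ i0) with hle | hle
    · rw [hfixi, max_eq_left hle]
      have h1 : |ψ i0| ≤ Mψ := hMψle' i0
      have := abs_le.1 h1
      linarith
    · have hui0 : u i0 = a u i0 := by rw [hfixi, max_eq_right hle]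
      have h1 : (∑ j, L i0 j * u j) - f i0 = L i0 i0 * (u i0 - a u i0) := by
        rw [hsum]
        simp only [ha]
        field_simp [(hdiag i0).ne']
        ring
      have heq : ∑ j, L i0 j * u j = f i0 := by
        rw [← hui0, sub_self, mul_zero] at h1
        linarith
      have hrle : (∑ j, L i0 j) * u i0 ≤ f i0 := by
        rw [← heq, Finset.sum_mul]
        refine Finset.sum_le_sum fun j _ => ?_
        by_cases hj : j = i0
        · subst hj; exact le_refl _
        · exact mul_le_mul_of_nonpos_left (hi0 j (mem_univ j)) (hoff i0 j (Ne.symm hj))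
      have hfle : f i0 ≤ Mf := (le_abs_self _).trans (hMfle' i0)
      rcases le_or_gt (u i0) 0 with h0 | h0
      · refine h0.trans (le_trans ?_ hMfle)
        positivity
      · have hcr : c ≤ ∑ j, L i0 j := by
          rw [hc]; exact Finset.inf'_le _ (mem_univ i0)
        have : c * u i0 ≤ Mf := by
          calc c * u i0 ≤ (∑ j, L i0 j) * u i0 :=
                mul_le_mul_of_nonneg_right hcr h0.le
            _ ≤ f i0 := hrle
            _ ≤ Mf := hfle
        have : u i0 ≤ c⁻¹ * Mf := by
          rw [inv_mul_eq_div, le_div_iff₀ hcpos]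
          linarith
        exact this.trans hMfle
  have hbound : univ.sup' hne (fun i => |u i|) ≤ M := by
    refine Finset.sup'_le _ _ fun i _ => abs_le.2 ⟨hlow i, (hi0 i (mem_univ i)).trans hupmax⟩
  refine ⟨u, hueq, hψu, hbound, ?_⟩
  intro u' h'
  have hfix' : Function.IsFixedPt T u' := by
    funext i
    exact ((hequiv u' i).1 (h' i)).symm
  exact hcontr.fixedPoint_unique hfix'
end

section
/- Discrete barrier supersolution (Step 1 of the existence proof): let c := min_i ∑_j L i j (which is positive by strict diagonal dominance and the sign conditions) and set E := max(‖ψ‖_∞, c⁻¹ ‖f‖_∞). Then the constant vector u⁰ with u⁰_i = E for every i satisfies G(u⁰)_i ≥ 0 for every i ∈ {1,…,N}. -/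
/-- **Discrete barrier supersolution** (Step 1 of the existence proof). With
`c := min_i ∑_j L i j` and `E := max(‖ψ‖_∞, c⁻¹ ‖f‖_∞)`, the constant vector
`u⁰ ≡ E` satisfies `G(u⁰)_i ≥ 0` for every `i`. -/
theorem discrete_barrier_supersolution
    (N : ℕ) (hN : 0 < N) (L : Matrix (Fin N) (Fin N) ℝ)
    (hdiag : ∀ i, 0 < L i i)
    (hoff : ∀ i j, i ≠ j → L i j ≤ 0)
    (hdom : ∀ i, ∑ j ∈ Finset.univ.erase i, |L i j| < L i i)
    (f ψ : Fin N → ℝ) (c E : ℝ)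
    (hc : c = Finset.univ.inf' ⟨⟨0, hN⟩, Finset.mem_univ _⟩ (fun i => ∑ j, L i j))
    (hE : E = max (Finset.univ.sup' ⟨⟨0, hN⟩, Finset.mem_univ _⟩ (fun i => |ψ i|))
            (c⁻¹ * Finset.univ.sup' ⟨⟨0, hN⟩, Finset.mem_univ _⟩ (fun i => |f i|))) :
    ∀ i, 0 ≤ min ((∑ j, L i j * E) - f i) (E - ψ i) := by
  intro i
  -- row sums are ≥ c and positive
  have hrow : ∀ k, c ≤ ∑ j, L k j := by
    intro k
    rw [hc]
    exact Finset.inf'_le _ (Finset.mem_univ k)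
  have hrowpos : ∀ k, (0:ℝ) < ∑ j, L k j := by
    intro k
    have h1 : ∑ j, L k j = L k k + ∑ j ∈ Finset.univ.erase k, L k j := by
      rw [add_comm, Finset.sum_erase_add _ _ (Finset.mem_univ k)]
    have h2 : -∑ j ∈ Finset.univ.erase k, L k j ≤ ∑ j ∈ Finset.univ.erase k, |L k j| := by
      rw [← Finset.sum_neg_distrib]
      exact Finset.sum_le_sum fun j _ => neg_le_abs _
    have := hdom k
    linarith
  have hcpos : (0:ℝ) < c := by
    rw [hc]
    exact (Finset.lt_inf'_iff _).2 fun k _ => hrowpos k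
  -- E bounds
  have hψE : |ψ i| ≤ E := by
    rw [hE]
    exact le_max_of_le_left (Finset.le_sup' (fun k => |ψ k|) (Finset.mem_univ i))
  have hfE : c⁻¹ * |f i| ≤ E := by
    rw [hE]
    refine le_max_of_le_right ?_
    have : |f i| ≤ Finset.univ.sup' ⟨⟨0, hN⟩, Finset.mem_univ _⟩ (fun k => |f k|) :=
      Finset.le_sup' (fun k => |f k|) (Finset.mem_univ i)
    exact mul_le_mul_of_nonneg_left this (inv_nonneg.2 hcpos.le)
  have hE0 : 0 ≤ E := le_trans (abs_nonneg _) hψE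
  refine le_min ?_ (by linarith [le_abs_self (ψ i)])
  · have hsum : (∑ j, L i j * E) = (∑ j, L i j) * E := by rw [Finset.sum_mul]
    have h1 : c * E ≤ (∑ j, L i j) * E := mul_le_mul_of_nonneg_right (hrow i) hE0
    have h2 : |f i| ≤ c * E := by
      have := mul_le_mul_of_nonneg_left hfE hcpos.le
      rwa [mul_inv_cancel_left₀ hcpos.ne'] at this
    have := le_abs_self (f i)
    rw [hsum]; linarith
end

section
/- Perron lowering step preserves supersolutions at other nodes (Step 2 of the existence proof): suppose only that L i j ≤ 0 whenever i ≠ j. Let i₀ ∈ {1,…,N} and let v, v' ∈ ℝ^N satisfy v'_{i₀} ≤ v_{i₀} and v'_j = v_j for every j ≠ i₀. Then G(v')_j ≥ G(v)_j for every j ≠ i₀; in particular, if G(v)_j ≥ 0 for all j and G(v')_{i₀} ≥ 0, then G(v')_j ≥ 0 for all j ∈ {1,…,N}. -/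
/-- **Perron lowering step preserves supersolutions at other nodes** (Step 2 of the
existence proof). Assume only `L i j ≤ 0` for `i ≠ j`. If `v'_{i₀} ≤ v_{i₀}` and
`v'_j = v_j` for `j ≠ i₀`, then `G(v')_j ≥ G(v)_j` for every `j ≠ i₀`; in particular,
if `G(v)_j ≥ 0` for all `j` and `G(v')_{i₀} ≥ 0`, then `G(v')_j ≥ 0` for all `j`. -/
theorem perron_lowering_step
    (N : ℕ) (hN : 0 < N) (L : Matrix (Fin N) (Fin N) ℝ)
    (hoff : ∀ i j, i ≠ j → L i j ≤ 0)
    (f ψ : Fin N → ℝ) (i₀ : Fin N) (v v' : Fin N → ℝ)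
    (hle : v' i₀ ≤ v i₀) (heq : ∀ j, j ≠ i₀ → v' j = v j) :
    (∀ j, j ≠ i₀ →
      min ((∑ k, L j k * v k) - f j) (v j - ψ j)
        ≤ min ((∑ k, L j k * v' k) - f j) (v' j - ψ j)) ∧
    ((∀ j, 0 ≤ min ((∑ k, L j k * v k) - f j) (v j - ψ j)) →
      0 ≤ min ((∑ k, L i₀ k * v' k) - f i₀) (v' i₀ - ψ i₀) →
      ∀ j, 0 ≤ min ((∑ k, L j k * v' k) - f j) (v' j - ψ j)) := by
  have hmain : ∀ j, j ≠ i₀ →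
      min ((∑ k, L j k * v k) - f j) (v j - ψ j)
        ≤ min ((∑ k, L j k * v' k) - f j) (v' j - ψ j) := by
    intro j hj
    have hsum : (∑ k, L j k * v k) ≤ ∑ k, L j k * v' k := by
      apply Finset.sum_le_sum
      intro k _
      by_cases hk : k = i₀
      · subst hk
        exact mul_le_mul_of_nonpos_left hle (hoff j k hj)
      · rw [heq k hk]
    have hv : v' j = v j := heq j hj
    exact le_min (min_le_left _ _ |>.trans (by linarith))
      (min_le_right _ _ |>.trans (by rw [hv]))
  refine ⟨hmain, fun hall h0 j => ?_⟩
  by_cases hj : j = i₀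
  · subst hj; exact h0
  · exact (hall j).trans (hmain j hj)
end

section
/- Monotonicity of policy iteration: for any policy-iteration sequence (u⁽ᵏ⁾, C⁽ᵏ⁾), one has u⁽ᵏ⁾_i ≤ u⁽ᵏ⁺¹⁾_i for every k ≥ 0 and every i ∈ {1,…,N}; consequently ψ_i ≤ u⁽ᵏ⁾_i for every k ≥ 0 and every i. -/
/-- Discrete maximum principle for strictly diagonally dominant matrices with
nonpositive off-diagonal entries. -/
lemma discrete_max_principle {N : ℕ} (hN : 0 < N) (L : Matrix (Fin N) (Fin N) ℝ)
    (hoff : ∀ i j, i ≠ j → L i j ≤ 0)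
    (hdom : ∀ i, ∑ j ∈ Finset.univ.erase i, |L i j| < L i i)
    (S : Set (Fin N)) (w : Fin N → ℝ)
    (h1 : ∀ i ∈ S, w i ≤ 0)
    (h2 : ∀ i ∉ S, ∑ j, L i j * w j ≤ 0) :
    ∀ i, w i ≤ 0 := by
  obtain ⟨i, -, hi⟩ := Finset.exists_max_image Finset.univ w ⟨⟨0, hN⟩, Finset.mem_univ _⟩
  have hw : w i ≤ 0 := by
    by_cases hiS : i ∈ S
    · exact h1 i hiS
    · by_contra hpos
      push_neg at hpos
      have hsplit : ∑ j, L i j * w j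
          = L i i * w i + ∑ j ∈ Finset.univ.erase i, L i j * w j := by
        rw [← Finset.add_sum_erase _ _ (Finset.mem_univ i)]
      have hbound : ∀ j ∈ Finset.univ.erase i, -(|L i j|) * w i ≤ L i j * w j := by
        intro j hj
        have hji : j ≠ i := Finset.ne_of_mem_erase hj
        have hL : L i j ≤ 0 := hoff i j hji.symm
        have habs : -(|L i j|) = L i j := by rw [abs_of_nonpos hL]; ring
        rw [habs]
        exact mul_le_mul_of_nonpos_left (hi j (Finset.mem_univ j)) hL
      have hsum : (∑ j ∈ Finset.univ.erase i, -(|L i j|) * w i)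
          ≤ ∑ j ∈ Finset.univ.erase i, L i j * w j :=
        Finset.sum_le_sum hbound
      have hsum' : (∑ j ∈ Finset.univ.erase i, -(|L i j|) * w i)
          = -(∑ j ∈ Finset.univ.erase i, |L i j|) * w i := by
        rw [← Finset.sum_mul, ← Finset.sum_neg_distrib]
      have hfin : 0 < ∑ j, L i j * w j := by
        rw [hsplit]
        have : 0 < (L i i - ∑ j ∈ Finset.univ.erase i, |L i j|) * w i :=
          mul_pos (by linarith [hdom i]) hpos
        rw [hsum'] at hsum
        nlinarith
      linarith [h2 i hiS]
  intro j
  exact le_trans (hi j (Finset.mem_univ j)) hw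

/-- **Monotonicity of policy iteration.** For any policy-iteration sequence
`(u⁽ᵏ⁾, C⁽ᵏ⁾)` for the discrete obstacle problem, one has `u⁽ᵏ⁾_i ≤ u⁽ᵏ⁺¹⁾_i`
for all `k ≥ 0` and all `i`; consequently `ψ_i ≤ u⁽ᵏ⁾_i` for all `k` and `i`. -/
theorem policy_iteration_monotone
    (N : ℕ) (hN : 0 < N) (L : Matrix (Fin N) (Fin N) ℝ)
    (hdiag : ∀ i, 0 < L i i)
    (hoff : ∀ i j, i ≠ j → L i j ≤ 0)
    (hdom : ∀ i, ∑ j ∈ Finset.univ.erase i, |L i j| < L i i)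
    (f ψ : Fin N → ℝ)
    (u : ℕ → Fin N → ℝ) (C : ℕ → Set (Fin N))
    (hu0 : u 0 = ψ) (hC0 : C 0 = Set.univ)
    (hC : ∀ k, C (k + 1) = {i | u k i - ψ i ≤ (∑ j, L i j * u k j) - f i})
    (hcontact : ∀ k, ∀ i ∈ C (k + 1), u (k + 1) i = ψ i)
    (hpde : ∀ k, ∀ i ∉ C (k + 1), (∑ j, L i j * u (k + 1) j) = f i) :
    (∀ k i, u k i ≤ u (k + 1) i) ∧ (∀ k i, ψ i ≤ u k i) := by
  -- structural properties at every step (including k = 0)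
  have hcontact' : ∀ k, ∀ i ∈ C k, u k i = ψ i := by
    intro k
    cases k with
    | zero => intro i _; rw [hu0]
    | succ k => exact hcontact k
  have hpde' : ∀ k, ∀ i ∉ C k, (∑ j, L i j * u k j) = f i := by
    intro k
    cases k with
    | zero => intro i hi; exact absurd (by rw [hC0]; trivial) hi
    | succ k => exact hpde k
  have mono : ∀ k i, u k i ≤ u (k + 1) i := by
    intro k
    have key : ∀ i, u k i - u (k + 1) i ≤ 0 := by
      apply discrete_max_principle hN L hoff hdom (C (k + 1))
      · intro i hi
        have hψ : u (k + 1) i = ψ i := hcontact k i hi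
        by_cases hik : i ∈ C k
        · rw [hcontact' k i hik, hψ]; simp
        · have hf : (∑ j, L i j * u k j) = f i := hpde' k i hik
          have := hi
          rw [hC k] at this
          simp only [Set.mem_setOf_eq, hf] at this
          linarith
      · intro i hi
        have hf : (∑ j, L i j * u (k + 1) j) = f i := hpde k i hi
        have hdiff : ∑ j, L i j * (u k j - u (k + 1) j)
            = (∑ j, L i j * u k j) - (∑ j, L i j * u (k + 1) j) := by
          rw [← Finset.sum_sub_distrib]
          exact Finset.sum_congr rfl fun j _ => by ring
        rw [hdiff, hf]
        by_cases hik : i ∈ C k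
        · have hψ : u k i = ψ i := hcontact' k i hik
          rw [hC k] at hi
          simp only [Set.mem_setOf_eq, not_le] at hi
          linarith
        · rw [hpde' k i hik]; simp
    intro i
    linarith [key i]
  refine ⟨mono, ?_⟩
  intro k
  induction k with
  | zero => intro i; rw [hu0]
  | succ k ih => intro i; exact le_trans (ih i) (mono k i)
end

section
/- Strictly decreasing discrete contact sets: for any policy-iteration sequence (u⁽ᵏ⁾, C⁽ᵏ⁾), one has C⁽ᵏ⁺¹⁾ ⊆ C⁽ᵏ⁾ for every k ≥ 1; moreover, if C⁽ᵏ⁺¹⁾ = C⁽ᵏ⁾ for some k ≥ 1, then u⁽ᵏ⁺¹⁾ = u⁽ᵏ⁾ and G(u⁽ᵏ⁾)_i = 0 for every i ∈ {1,…,N}. -/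
/-- Discrete maximum principle for strictly diagonally dominant matrices with
nonpositive off-diagonal entries: if at every index either `v i ≥ 0` or
`(L v)_i ≥ 0`, then `v ≥ 0`. -/
private lemma pi_max_principle {N : ℕ} (L : Matrix (Fin N) (Fin N) ℝ)
    (hoff : ∀ i j, i ≠ j → L i j ≤ 0)
    (hdom : ∀ i, ∑ j ∈ Finset.univ.erase i, |L i j| < L i i)
    (v : Fin N → ℝ)
    (h : ∀ i, 0 ≤ v i ∨ 0 ≤ ∑ j, L i j * v j) :
    ∀ i, 0 ≤ v i := by
  by_contra hc
  push_neg at hc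
  obtain ⟨i₀, hi₀⟩ := hc
  obtain ⟨m, -, hm⟩ := Finset.exists_min_image Finset.univ v ⟨i₀, Finset.mem_univ i₀⟩
  have hmneg : v m < 0 := lt_of_le_of_lt (hm i₀ (Finset.mem_univ i₀)) hi₀
  rcases h m with h1 | h2
  · linarith
  · have split : ∑ j, L m j * v j = L m m * v m + ∑ j ∈ Finset.univ.erase m, L m j * v j :=
      (Finset.add_sum_erase Finset.univ (fun j => L m j * v j) (Finset.mem_univ m)).symm
    have hb : ∀ j ∈ Finset.univ.erase m, L m j * v j ≤ L m j * v m := by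
      intro j hj
      have hjm : j ≠ m := (Finset.mem_erase.mp hj).1
      exact mul_le_mul_of_nonpos_left (hm j (Finset.mem_univ j)) (hoff m j (Ne.symm hjm))
    have hb2 : ∑ j ∈ Finset.univ.erase m, L m j * v j ≤
        (∑ j ∈ Finset.univ.erase m, L m j) * v m := by
      rw [Finset.sum_mul]
      exact Finset.sum_le_sum hb
    have hrow : -(L m m) < ∑ j ∈ Finset.univ.erase m, L m j := by
      have h3 : -(∑ j ∈ Finset.univ.erase m, |L m j|) ≤ ∑ j ∈ Finset.univ.erase m, L m j := by
        rw [← Finset.sum_neg_distrib]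
        exact Finset.sum_le_sum fun j _ => neg_abs_le _
      have := hdom m
      linarith
    nlinarith [hm m (Finset.mem_univ m)]

/-- If `v ≥ 0` and `(L v)_i > 0` then `v i > 0`. -/
private lemma pi_strict_pos {N : ℕ} (L : Matrix (Fin N) (Fin N) ℝ)
    (hoff : ∀ i j, i ≠ j → L i j ≤ 0)
    (v : Fin N → ℝ) (hv : ∀ i, 0 ≤ v i) (i : Fin N)
    (h : 0 < ∑ j, L i j * v j) : 0 < v i := by
  by_contra hc
  push_neg at hc
  have hvi : v i = 0 := le_antisymm hc (hv i)
  have split : ∑ j, L i j * v j = L i i * v i + ∑ j ∈ Finset.univ.erase i, L i j * v j :=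
    (Finset.add_sum_erase Finset.univ (fun j => L i j * v j) (Finset.mem_univ i)).symm
  have hb : ∑ j ∈ Finset.univ.erase i, L i j * v j ≤ 0 := by
    apply Finset.sum_nonpos
    intro j hj
    have hji : j ≠ i := (Finset.mem_erase.mp hj).1
    exact mul_nonpos_of_nonpos_of_nonneg (hoff i j (Ne.symm hji)) (hv j)
  rw [split, hvi] at h
  linarith

/-- **Strictly decreasing discrete contact sets.** For any policy-iteration sequence
`(u⁽ᵏ⁾, C⁽ᵏ⁾)`, one has `C⁽ᵏ⁺¹⁾ ⊆ C⁽ᵏ⁾` for every `k ≥ 1`; moreover, if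
`C⁽ᵏ⁺¹⁾ = C⁽ᵏ⁾` for some `k ≥ 1`, then `u⁽ᵏ⁺¹⁾ = u⁽ᵏ⁾` and `G(u⁽ᵏ⁾)_i = 0`
for every `i`. -/
theorem policy_iteration_contact_sets_decreasing
    (N : ℕ) (hN : 0 < N) (L : Matrix (Fin N) (Fin N) ℝ)
    (hdiag : ∀ i, 0 < L i i)
    (hoff : ∀ i j, i ≠ j → L i j ≤ 0)
    (hdom : ∀ i, ∑ j ∈ Finset.univ.erase i, |L i j| < L i i)
    (f ψ : Fin N → ℝ)
    (u : ℕ → Fin N → ℝ) (C : ℕ → Set (Fin N))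
    (hu0 : u 0 = ψ) (hC0 : C 0 = Set.univ)
    (hC : ∀ k, C (k + 1) = {i | u k i - ψ i ≤ (∑ j, L i j * u k j) - f i})
    (hcontact : ∀ k, ∀ i ∈ C (k + 1), u (k + 1) i = ψ i)
    (hpde : ∀ k, ∀ i ∉ C (k + 1), (∑ j, L i j * u (k + 1) j) = f i) :
    (∀ k, 1 ≤ k → C (k + 1) ⊆ C k) ∧
    (∀ k, 1 ≤ k → C (k + 1) = C k →
      u (k + 1) = u k ∧
      ∀ i, min ((∑ j, L i j * u k j) - f i) (u k i - ψ i) = 0) := by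
  have sumdiff : ∀ (a b : Fin N → ℝ) (i : Fin N),
      ∑ j, L i j * (a j - b j) = (∑ j, L i j * a j) - ∑ j, L i j * b j := by
    intro a b i
    simp [mul_sub, Finset.sum_sub_distrib]
  -- key invariant: for k ≥ 1, u k ≥ ψ, strictly off C k
  have inv : ∀ m : ℕ, (∀ i, ψ i ≤ u (m + 1) i) ∧ (∀ i, i ∉ C (m + 1) → ψ i < u (m + 1) i) := by
    intro m
    induction m with
    | zero =>
      have hnn : ∀ i, 0 ≤ u 1 i - ψ i := by
        apply pi_max_principle L hoff hdom
        intro i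
        by_cases hi : i ∈ C 1
        · left
          rw [hcontact 0 i hi]; simp
        · right
          rw [sumdiff, hpde 0 i hi]
          rw [hC 0] at hi
          simp only [Set.mem_setOf_eq, not_le, hu0] at hi
          linarith
      refine ⟨fun i => by linarith [hnn i], ?_⟩
      intro i hi
      have hpos : 0 < ∑ j, L i j * (u 1 j - ψ j) := by
        rw [sumdiff, hpde 0 i hi]
        rw [hC 0] at hi
        simp only [Set.mem_setOf_eq, not_le, hu0] at hi
        linarith
      have := pi_strict_pos L hoff _ hnn i hpos
      linarith
    | succ n ih =>
      have hsub : C (n + 1 + 1) ⊆ C (n + 1) := by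
        intro i hi
        by_contra hik
        have hpd := hpde n i hik
        have hstrict := ih.2 i hik
        rw [hC (n + 1)] at hi
        simp only [Set.mem_setOf_eq] at hi
        rw [hpd] at hi
        linarith
      have hmono : ∀ i, 0 ≤ u (n + 1 + 1) i - u (n + 1) i := by
        apply pi_max_principle L hoff hdom
        intro i
        by_cases hi : i ∈ C (n + 1 + 1)
        · left
          rw [hcontact (n + 1) i hi, hcontact n i (hsub hi)]; simp
        · right
          rw [sumdiff, hpde (n + 1) i hi]
          by_cases hik : i ∈ C (n + 1)
          · have h1 : u (n + 1) i = ψ i := hcontact n i hik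
            rw [hC (n + 1)] at hi
            simp only [Set.mem_setOf_eq, not_le] at hi
            linarith
          · rw [hpde n i hik]; simp
      refine ⟨fun i => by linarith [ih.1 i, hmono i], ?_⟩
      intro i hi
      by_cases hik : i ∈ C (n + 1)
      · have h1 : u (n + 1) i = ψ i := hcontact n i hik
        have hpos : 0 < ∑ j, L i j * (u (n + 1 + 1) j - u (n + 1) j) := by
          rw [sumdiff, hpde (n + 1) i hi]
          rw [hC (n + 1)] at hi
          simp only [Set.mem_setOf_eq, not_le] at hi
          linarith
        have := pi_strict_pos L hoff _ hmono i hpos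
        linarith
      · have := ih.2 i hik
        linarith [hmono i]
  constructor
  · intro k hk
    obtain ⟨n, rfl⟩ := Nat.exists_eq_add_of_le' hk
    intro i hi
    by_contra hik
    have hpd := hpde n i hik
    have hstrict := (inv n).2 i hik
    rw [hC (n + 1)] at hi
    simp only [Set.mem_setOf_eq] at hi
    rw [hpd] at hi
    linarith
  · intro k hk hCeq
    obtain ⟨n, rfl⟩ := Nat.exists_eq_add_of_le' hk
    have huz : ∀ i, u (n + 1 + 1) i - u (n + 1) i = 0 := by
      have key : ∀ i, (i ∈ C (n + 1 + 1) ∧ u (n + 1 + 1) i - u (n + 1) i = 0) ∨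
          (i ∉ C (n + 1 + 1) ∧ ∑ j, L i j * (u (n + 1 + 1) j - u (n + 1) j) = 0) := by
        intro i
        by_cases hi : i ∈ C (n + 1 + 1)
        · left
          refine ⟨hi, ?_⟩
          have hi' : i ∈ C (n + 1) := by rw [← hCeq]; exact hi
          rw [hcontact (n + 1) i hi, hcontact n i hi']
          ring
        · right
          refine ⟨hi, ?_⟩
          have hi' : i ∉ C (n + 1) := by rw [← hCeq]; exact hi
          rw [sumdiff, hpde (n + 1) i hi, hpde n i hi']
          ring
      have h1 : ∀ i, 0 ≤ u (n + 1 + 1) i - u (n + 1) i := by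
        apply pi_max_principle L hoff hdom
        intro i
        rcases key i with ⟨-, h⟩ | ⟨-, h⟩
        · left; linarith
        · right; linarith
      have h2 : ∀ i, 0 ≤ u (n + 1) i - u (n + 1 + 1) i := by
        apply pi_max_principle L hoff hdom
        intro i
        rcases key i with ⟨-, h⟩ | ⟨-, h⟩
        · left; linarith
        · right
          rw [sumdiff]
          rw [sumdiff] at h
          linarith
      intro i
      have := h1 i
      have := h2 i
      linarith
    constructor
    · funext i
      have := huz i
      linarith
    · intro i
      by_cases hi : i ∈ C (n + 1)
      · have h1 : u (n + 1) i = ψ i := hcontact n i hi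
        have hi2 : i ∈ C (n + 1 + 1) := by rw [hCeq]; exact hi
        rw [hC (n + 1)] at hi2
        simp only [Set.mem_setOf_eq] at hi2
        rw [min_eq_right (by linarith), h1]
        ring
      · have hpd := hpde n i hi
        have hstrict := (inv n).2 i hi
        rw [min_eq_left (by rw [hpd]; linarith), hpd]
        ring
end

section
/- Finite convergence of policy iteration: for any policy-iteration sequence (u⁽ᵏ⁾, C⁽ᵏ⁾), there exists k ≤ N such that G(u⁽ᵏ⁾)_i = 0 for every i ∈ {1,…,N}, and u⁽ʲ⁾ = u⁽ᵏ⁾ for every j ≥ k; i.e., the algorithm converges in at most N iterations to the unique discrete solution. -/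
/-- Discrete maximum principle for strictly diagonally dominant Z-matrices. -/
private lemma pi_maxprin {N : ℕ} (L : Matrix (Fin N) (Fin N) ℝ)
    (hoff : ∀ i j, i ≠ j → L i j ≤ 0)
    (hdom : ∀ i, ∑ j ∈ Finset.univ.erase i, |L i j| < L i i)
    (d : Fin N → ℝ)
    (h : ∀ i, 0 ≤ d i ∨ 0 ≤ ∑ j, L i j * d j) :
    ∀ i, 0 ≤ d i := by
  by_contra hc
  push_neg at hc
  obtain ⟨i0, hi0⟩ := hc
  obtain ⟨m, -, hm⟩ := Finset.exists_min_image Finset.univ d ⟨i0, Finset.mem_univ i0⟩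
  have hmneg : d m < 0 := lt_of_le_of_lt (hm i0 (Finset.mem_univ i0)) hi0
  have hLd : 0 ≤ ∑ j, L m j * d j := (h m).resolve_left (by linarith)
  have key : ∑ j, L m j * d j ≤ (∑ j, L m j) * d m := by
    rw [Finset.sum_mul]
    refine Finset.sum_le_sum ?_
    intro j _
    rcases eq_or_ne j m with rfl | hjm
    · exact le_refl _
    · exact mul_le_mul_of_nonpos_left (hm j (Finset.mem_univ j)) (hoff m j (Ne.symm hjm))
  have hrow : 0 < ∑ j, L m j := by
    have h1 : ∑ j, L m j = L m m + ∑ j ∈ Finset.univ.erase m, L m j :=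
      (Finset.add_sum_erase _ _ (Finset.mem_univ m)).symm
    have h2 : ∑ j ∈ Finset.univ.erase m, (-|L m j|) ≤ ∑ j ∈ Finset.univ.erase m, L m j :=
      Finset.sum_le_sum fun j _ => neg_abs_le _
    rw [Finset.sum_neg_distrib] at h2
    have := hdom m
    linarith
  nlinarith

/-- Uniqueness of solutions of mixed Dirichlet/linear systems. -/
private lemma pi_uniq {N : ℕ} (L : Matrix (Fin N) (Fin N) ℝ)
    (hoff : ∀ i j, i ≠ j → L i j ≤ 0)
    (hdom : ∀ i, ∑ j ∈ Finset.univ.erase i, |L i j| < L i i)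
    (v w : Fin N → ℝ) (A : Set (Fin N))
    (hA : ∀ i ∈ A, v i = w i)
    (hAc : ∀ i ∉ A, (∑ j, L i j * v j) = ∑ j, L i j * w j) :
    v = w := by
  have hsum : ∀ (a b : Fin N → ℝ) i,
      ∑ j, L i j * (a j - b j) = (∑ j, L i j * a j) - ∑ j, L i j * b j := by
    intro a b i
    rw [← Finset.sum_sub_distrib]
    exact Finset.sum_congr rfl fun j _ => by ring
  have h1 : ∀ i, 0 ≤ v i - w i := by
    refine pi_maxprin L hoff hdom _ ?_
    intro i
    by_cases hiA : i ∈ A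
    · left; rw [hA i hiA]; simp
    · right; rw [hsum, hAc i hiA]; simp
  have h2 : ∀ i, 0 ≤ w i - v i := by
    refine pi_maxprin L hoff hdom _ ?_
    intro i
    by_cases hiA : i ∈ A
    · left; rw [hA i hiA]; simp
    · right; rw [hsum, hAc i hiA]; simp
  funext i
  have := h1 i; have := h2 i; linarith

/-- **Finite convergence of policy iteration.** For any policy-iteration sequence
`(u⁽ᵏ⁾, C⁽ᵏ⁾)`, there exists `k ≤ N` such that `G(u⁽ᵏ⁾)_i = 0` for every `i`,
and `u⁽ʲ⁾ = u⁽ᵏ⁾` for every `j ≥ k`: the algorithm converges in at most `N`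
iterations to the (unique) discrete solution. -/
theorem policy_iteration_finite_convergence
    (N : ℕ) (hN : 0 < N) (L : Matrix (Fin N) (Fin N) ℝ)
    (hdiag : ∀ i, 0 < L i i)
    (hoff : ∀ i j, i ≠ j → L i j ≤ 0)
    (hdom : ∀ i, ∑ j ∈ Finset.univ.erase i, |L i j| < L i i)
    (f ψ : Fin N → ℝ)
    (u : ℕ → Fin N → ℝ) (C : ℕ → Set (Fin N))
    (hu0 : u 0 = ψ) (hC0 : C 0 = Set.univ)
    (hC : ∀ k, C (k + 1) = {i | u k i - ψ i ≤ (∑ j, L i j * u k j) - f i})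
    (hcontact : ∀ k, ∀ i ∈ C (k + 1), u (k + 1) i = ψ i)
    (hpde : ∀ k, ∀ i ∉ C (k + 1), (∑ j, L i j * u (k + 1) j) = f i) :
    ∃ k ≤ N,
      (∀ i, min ((∑ j, L i j * u k j) - f i) (u k i - ψ i) = 0) ∧
      ∀ j, k ≤ j → u j = u k := by
  -- contact condition for all k (including k = 0)
  have contact : ∀ k, ∀ i ∈ C k, u k i = ψ i := by
    intro k
    cases k with
    | zero => intro i _; rw [hu0]
    | succ k => exact hcontact k
  -- PDE condition for all k (vacuous for k = 0)
  have pde : ∀ k, ∀ i ∉ C k, (∑ j, L i j * u k j) = f i := by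
    intro k
    cases k with
    | zero => intro i hi; exact absurd (by rw [hC0]; trivial) hi
    | succ k => exact hpde k
  have hsum : ∀ (a b : Fin N → ℝ) i,
      ∑ j, L i j * (a j - b j) = (∑ j, L i j * a j) - ∑ j, L i j * b j := by
    intro a b i
    rw [← Finset.sum_sub_distrib]
    exact Finset.sum_congr rfl fun j _ => by ring
  -- monotonicity: u k ≤ u (k+1)
  have mono : ∀ k i, u k i ≤ u (k + 1) i := by
    intro k
    have key : ∀ i, 0 ≤ u (k + 1) i - u k i := by
      refine pi_maxprin L hoff hdom _ ?_
      intro i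
      by_cases hi : i ∈ C (k + 1)
      · left
        have h1 : u (k + 1) i = ψ i := hcontact k i hi
        by_cases hik : i ∈ C k
        · rw [h1, contact k i hik]; simp
        · have h2 := pde k i hik
          have h3 : u k i - ψ i ≤ (∑ j, L i j * u k j) - f i := by
            rw [hC k] at hi; exact hi
          rw [h2] at h3
          rw [h1]; linarith
      · right
        have h2 := hpde k i hi
        have h3 : ¬(u k i - ψ i ≤ (∑ j, L i j * u k j) - f i) := by
          rw [hC k] at hi; exact hi
        push_neg at h3
        rw [hsum, h2]
        by_cases hik : i ∈ C k
        · have h4 := contact k i hik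
          rw [h4] at h3
          linarith
        · rw [pde k i hik]; simp
    intro i
    have := key i; linarith
  -- u k ≥ ψ for all k
  have hpsi : ∀ k i, ψ i ≤ u k i := by
    intro k
    induction k with
    | zero => intro i; rw [hu0]
    | succ k ih => intro i; exact le_trans (ih i) (mono k i)
  -- the coincidence sets
  set S : ℕ → Finset (Fin N) := fun k => Finset.univ.filter (fun i => u k i = ψ i) with hS
  have Smem : ∀ k i, i ∈ S k ↔ u k i = ψ i := by
    intro k i; simp [hS]
  have Sdec : ∀ k, S (k + 1) ⊆ S k := by
    intro k i hi
    rw [Smem] at hi ⊢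
    have h1 := mono k i
    have h2 := hpsi k i
    rw [hi] at h1
    linarith
  -- pigeonhole: some consecutive coincidence sets are equal
  have pigeon : ∃ k ≤ N, S (k + 1) = S k := by
    by_contra h
    push_neg at h
    have hcard : ∀ k, k ≤ N + 1 → (S k).card + k ≤ N := by
      intro k
      induction k with
      | zero =>
        intro _
        have := Finset.card_le_univ (S 0)
        simpa using this
      | succ k ih =>
        intro hk
        have hk' : k ≤ N + 1 := by omega
        have hne := h k (by omega)
        have hlt : (S (k + 1)).card < (S k).card :=
          Finset.card_lt_card (lt_of_le_of_ne (Sdec k) hne)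
        have := ih hk'
        omega
    have := hcard (N + 1) le_rfl
    omega
  obtain ⟨k, hkN, hSk⟩ := pigeon
  -- from set coincidence we get one fixed step
  have hufix : u (k + 1) = u k := by
    cases k with
    | zero =>
      have hS0 : S 0 = Finset.univ := by
        ext i; rw [Smem, hu0]; simp
      funext i
      have hi1 : i ∈ S 1 := by rw [hSk, hS0]; exact Finset.mem_univ i
      rw [Smem] at hi1
      rw [hi1, hu0]
    | succ k' =>
      refine pi_uniq L hoff hdom _ _ {i | u (k' + 1) i = ψ i} ?_ ?_
      · intro i hi
        have hiS : i ∈ S (k' + 1) := by rw [Smem]; exact hi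
        have hiS1 : i ∈ S (k' + 1 + 1) := by rw [hSk]; exact hiS
        rw [Smem] at hiS1
        rw [hiS1, hi]
      · intro i hi
        have hiS : i ∉ S (k' + 1) := by rw [Smem]; exact hi
        have hiS1 : i ∉ S (k' + 1 + 1) := by rw [hSk]; exact hiS
        rw [Smem] at hiS1
        have hnc : i ∉ C (k' + 1) := fun hc => hi (contact _ i hc)
        have hnc1 : i ∉ C (k' + 1 + 1) := fun hc => hiS1 (hcontact _ i hc)
        rw [pde _ i hnc1, pde _ i hnc]
  -- one fixed step propagates forever
  have step : ∀ j, u (j + 1) = u j → u (j + 2) = u (j + 1) := by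
    intro j hj
    have hCeq : C (j + 2) = C (j + 1) := by
      rw [hC (j + 1), hC j, hj]
    refine pi_uniq L hoff hdom _ _ (C (j + 1)) ?_ ?_
    · intro i hi
      rw [hcontact (j + 1) i (by rw [hCeq]; exact hi), hcontact j i hi]
    · intro i hi
      rw [hpde (j + 1) i (by rw [hCeq]; exact hi), hpde j i hi]
  have all : ∀ t, u (k + t) = u k := by
    have aux : ∀ t, u (k + t + 1) = u (k + t) := by
      intro t
      induction t with
      | zero => exact hufix
      | succ t ih => exact step (k + t) ih
    intro t
    induction t with
    | zero => rfl
    | succ t ih => rw [← ih]; exact aux t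
  refine ⟨k, hkN, ?_, ?_⟩
  · intro i
    by_cases hi : i ∈ C (k + 1)
    · have h1 : u (k + 1) i = ψ i := hcontact k i hi
      have h1' : u k i = ψ i := by rw [← congrFun hufix i]; exact h1
      have h2 : u k i - ψ i ≤ (∑ j, L i j * u k j) - f i := by
        rw [hC k] at hi; exact hi
      rw [h1', sub_self]
      exact min_eq_right (by linarith)
    · have h2 := hpde k i hi
      rw [hufix] at h2
      have h3 : ¬(u k i - ψ i ≤ (∑ j, L i j * u k j) - f i) := by
        rw [hC k] at hi; exact hi
      push_neg at h3
      rw [h2] at h3 ⊢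
      rw [sub_self]
      exact min_eq_left (by linarith)
  · intro j hj
    obtain ⟨t, rfl⟩ : ∃ t, j = k + t := ⟨j - k, by omega⟩
    exact all t
end

section
/- L∞ estimate for the fractional obstacle problem with zero forcing: let Ω be a bounded open set, let ψ : ℝⁿ → ℝ be bounded on Ω with ψ < 0 on ℝⁿ \ Ω, and let u solve the fractional obstacle problem with f = 0. Then for every x ∈ Ω: max(ψ(x), 0) ≤ u(x) ≤ sup_{y ∈ Ω} max(ψ(y), 0). -/
open MeasureTheory Metric Set Filter

/-- `fracLapEq n s u x g` : the integral fractional Laplacian `(−Δ)^s u(x)` exists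
(as a principal value) and equals `g`. -/
def fracLapEq (n : ℕ) (s : ℝ) (u : EuclideanSpace ℝ (Fin n) → ℝ)
    (x : EuclideanSpace ℝ (Fin n)) (g : ℝ) : Prop :=
  Tendsto (fun ε : ℝ =>
      (2 ^ (2 * s) * s * Real.Gamma (s + n / 2) /
          (Real.pi ^ ((n : ℝ) / 2) * Real.Gamma (1 - s))) *
        ∫ y in {y : EuclideanSpace ℝ (Fin n) | ε < dist y x},
          (u x - u y) / dist x y ^ ((n : ℝ) + 2 * s))
    (nhdsWithin 0 (Ioi 0)) (nhds g)

/-- `u` solves the fractional obstacle problem on `Ω` with forcing `f` and obstacle `ψ`. -/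
def SolvesObstacle (n : ℕ) (s : ℝ) (Ω : Set (EuclideanSpace ℝ (Fin n)))
    (f ψ u : EuclideanSpace ℝ (Fin n) → ℝ) : Prop :=
  (∃ M, ∀ x, |u x| ≤ M) ∧ Continuous u ∧ (∀ x ∉ Ω, u x = 0) ∧
    ∀ x ∈ Ω, ∃ g, fracLapEq n s u x g ∧ min (g - f x) (u x - ψ x) = 0

private lemma integrableOn_kernel (n : ℕ) {q : ℝ} (hq : (n : ℝ) < q)
    (x₀ : EuclideanSpace ℝ (Fin n)) {ε : ℝ} (hε : 0 < ε)
    (v : EuclideanSpace ℝ (Fin n) → ℝ) (hv : Continuous v) (M : ℝ) (hM : ∀ x, |v x| ≤ M) :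
    IntegrableOn (fun y => v y / dist x₀ y ^ q) {y | ε < dist y x₀} := by
  have hq0 : 0 ≤ q := le_trans (Nat.cast_nonneg n) hq.le
  have hSopen : IsOpen {y : EuclideanSpace ℝ (Fin n) | ε < dist y x₀} :=
    isOpen_lt continuous_const (continuous_id.dist continuous_const)
  have hSm := hSopen.measurableSet
  have hM0 : 0 ≤ M := le_trans (abs_nonneg _) (hM x₀)
  -- dominating function
  have hint : Integrable (fun y : EuclideanSpace ℝ (Fin n) =>
      (M * (1 + 1/ε) ^ q) * (1 + ‖y - x₀‖) ^ (-q)) volume := by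
    have h1 : Integrable (fun y : EuclideanSpace ℝ (Fin n) => (1 + ‖y‖) ^ (-q)) volume := by
      apply integrable_one_add_norm
      simpa using hq
    exact (h1.comp_sub_right x₀).const_mul _
  refine Integrable.mono' (hint.integrableOn) ?_ ?_
  · apply ContinuousOn.aestronglyMeasurable ?_ hSm
    apply ContinuousOn.div hv.continuousOn
    · exact (Continuous.rpow_const (continuous_const.dist continuous_id)
        (fun y => Or.inr hq0)).continuousOn
    · intro y hy
      have : (0:ℝ) < dist x₀ y := by
        rw [dist_comm]; exact lt_trans hε hy
      exact (Real.rpow_pos_of_pos this q).ne'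
  · rw [ae_restrict_iff' hSm]
    filter_upwards with y hy
    have hd : ε < dist x₀ y := by rw [dist_comm]; exact hy
    have hd0 : (0:ℝ) < dist x₀ y := lt_trans hε hd
    have hkey : dist x₀ y ^ (-q) ≤ (1 + 1/ε) ^ q * (1 + ‖y - x₀‖) ^ (-q) := by
      have hnorm : ‖y - x₀‖ = dist x₀ y := by rw [dist_comm, dist_eq_norm]
      rw [hnorm]
      set d := dist x₀ y
      have h1 : 1 + d ≤ (1 + 1/ε) * d := by
        have : 1 ≤ d / ε := (one_le_div hε).2 hd.le
        have : 1 ≤ d * (1/ε) := by rwa [mul_one_div]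
        nlinarith
      have h2 : (1 + d) ^ q ≤ ((1 + 1/ε) * d) ^ q :=
        Real.rpow_le_rpow (by positivity) h1 hq0
      rw [Real.mul_rpow (by positivity) hd0.le] at h2
      rw [Real.rpow_neg hd0.le, Real.rpow_neg (by positivity)]
      rw [inv_le_iff_one_le_mul₀ (by positivity : (0:ℝ) < d^q)]
      have hpos : (0:ℝ) < (1+d)^q := by positivity
      have h3 := (one_le_div hpos).mpr h2
      calc (1:ℝ) ≤ (1 + 1/ε) ^ q * d ^ q / (1+d)^q := h3
        _ = (1 + 1/ε) ^ q * ((1+d)^q)⁻¹ * d ^ q := by ring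
    calc ‖v y / dist x₀ y ^ q‖ = |v y| / dist x₀ y ^ q := by
          rw [Real.norm_eq_abs, abs_div, abs_of_nonneg (Real.rpow_nonneg dist_nonneg q)]
      _ ≤ M / dist x₀ y ^ q := by gcongr; exact hM y
      _ = M * dist x₀ y ^ (-q) := by
          rw [Real.rpow_neg hd0.le, div_eq_mul_inv]
      _ ≤ M * ((1 + 1/ε) ^ q * (1 + ‖y - x₀‖) ^ (-q)) := by
          exact mul_le_mul_of_nonneg_left hkey hM0
      _ = (M * (1 + 1/ε) ^ q) * (1 + ‖y - x₀‖) ^ (-q) := by ring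

private lemma key_lemma (n : ℕ) (hn : 0 < n) {s : ℝ} (hs : s ∈ Set.Ioo (0:ℝ) 1)
    (Ω : Set (EuclideanSpace ℝ (Fin n))) (hΩb : Bornology.IsBounded Ω)
    (u : EuclideanSpace ℝ (Fin n) → ℝ) (M : ℝ) (hb : ∀ x, |u x| ≤ M)
    (hcont : Continuous u) (hu0 : ∀ x ∉ Ω, u x = 0)
    (x₀ : EuclideanSpace ℝ (Fin n)) (hmax : ∀ y, u y ≤ u x₀) (hpos : 0 < u x₀)
    {g : ℝ} (hg : fracLapEq n s u x₀ g) : 0 < g := by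
  obtain ⟨hs0, hs1⟩ := hs
  set q : ℝ := (n : ℝ) + 2 * s with hqdef
  have hq : (n : ℝ) < q := by simp [hqdef]; linarith
  have hq0 : (0:ℝ) < q := lt_of_le_of_lt (Nat.cast_nonneg n) hq
  -- the constant is positive
  set C : ℝ := 2 ^ (2 * s) * s * Real.Gamma (s + n / 2) /
      (Real.pi ^ ((n : ℝ) / 2) * Real.Gamma (1 - s)) with hCdef
  have hC : 0 < C := by
    apply div_pos
    · apply mul_pos (mul_pos (Real.rpow_pos_of_pos two_pos _) hs0)
      exact Real.Gamma_pos_of_pos (by positivity)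
    · exact mul_pos (Real.rpow_pos_of_pos Real.pi_pos _)
        (Real.Gamma_pos_of_pos (by linarith))
  -- nonneg integrand
  have hnn : ∀ y, 0 ≤ (u x₀ - u y) / dist x₀ y ^ q := fun y =>
    div_nonneg (by linarith [hmax y]) (Real.rpow_nonneg dist_nonneg q)
  have hintOn : ∀ {ε : ℝ}, 0 < ε →
      IntegrableOn (fun y => (u x₀ - u y) / dist x₀ y ^ q) {y | ε < dist y x₀} := by
    intro ε hε
    exact integrableOn_kernel n hq x₀ hε _ (continuous_const.sub hcont) (|u x₀| + M)
      (fun y => (abs_sub _ _).trans (by gcongr; exact hb y))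
  -- Radius outside which u vanishes
  obtain ⟨R₀, hR₀⟩ := hΩb.subset_closedBall x₀
  set R : ℝ := max R₀ 1 with hRdef
  have hR1 : (1:ℝ) ≤ R := le_max_right _ _
  have hRout : ∀ y : EuclideanSpace ℝ (Fin n), R < dist y x₀ → u y = 0 := by
    intro y hy
    apply hu0
    intro hmem
    have := hR₀ hmem
    rw [mem_closedBall] at this
    have : dist y x₀ ≤ R := this.trans (le_max_left _ _)
    linarith
  -- the far integral
  set J : ℝ := ∫ y in {y : EuclideanSpace ℝ (Fin n) | R < dist y x₀}, 1 / dist x₀ y ^ q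
    with hJdef
  have hJint : IntegrableOn (fun y => (1:ℝ) / dist x₀ y ^ q)
      {y : EuclideanSpace ℝ (Fin n) | R < dist y x₀} :=
    integrableOn_kernel n hq x₀ (by linarith) _ continuous_const 1 (by simp)
  have hJpos : 0 < J := by
    rw [hJdef, setIntegral_pos_iff_support_of_nonneg_ae]
    · -- 0 < volume (support ∩ set)
      have hsub : {y : EuclideanSpace ℝ (Fin n) | R + 1 < dist y x₀} ⊆
          (Function.support fun y => 1 / dist x₀ y ^ q) ∩ {y | R < dist y x₀} := by
        intro y hy
        have hy' : R < dist y x₀ := by simp at hy ⊢; linarith [hy]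
        refine ⟨?_, hy'⟩
        have hd0 : (0:ℝ) < dist x₀ y := by rw [dist_comm]; linarith
        simp [Function.support]
        positivity
      refine lt_of_lt_of_le ?_ (measure_mono hsub)
      apply (isOpen_lt continuous_const (continuous_id.dist continuous_const)).measure_pos
        volume
      -- nonempty
      refine ⟨x₀ + (R + 2) • EuclideanSpace.single (⟨0, hn⟩ : Fin n) (1:ℝ), ?_⟩
      have : dist (x₀ + (R + 2) • EuclideanSpace.single (⟨0, hn⟩ : Fin n) (1:ℝ)) x₀
          = R + 2 := by
        rw [dist_eq_norm, add_sub_cancel_left, norm_smul, EuclideanSpace.norm_single]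
        simp
        linarith
      simp only [mem_setOf_eq, id_eq, this]
      linarith
    · exact ae_of_all _ (fun y => by positivity)
    · exact hJint
  -- the lower bound c
  set c : ℝ := u x₀ * J with hcdef
  have hc : 0 < c := mul_pos hpos hJpos
  -- far integral equals c
  have hfar : ∫ y in {y : EuclideanSpace ℝ (Fin n) | R < dist y x₀},
      (u x₀ - u y) / dist x₀ y ^ q = c := by
    rw [hcdef, hJdef, ← integral_const_mul]
    apply setIntegral_congr_fun (isOpen_lt continuous_const
        (continuous_id.dist continuous_const)).measurableSet
    intro y hy
    simp only [mem_setOf_eq, id_eq] at hy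
    show (u x₀ - u y) / dist x₀ y ^ q = u x₀ * (1 / dist x₀ y ^ q)
    rw [hRout y hy]
    ring
  -- chain of inequalities
  have hchain : ∀ ε : ℝ, ε ∈ Ioo (0:ℝ) 1 →
      c ≤ ∫ y in {y : EuclideanSpace ℝ (Fin n) | ε < dist y x₀},
        (u x₀ - u y) / dist x₀ y ^ q := by
    intro ε hε
    rw [← hfar]
    apply setIntegral_mono_set (hintOn hε.1)
    · exact ae_of_all _ (fun y => hnn y)
    · apply HasSubset.Subset.eventuallyLE
      intro y hy
      simp only [mem_setOf_eq] at hy ⊢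
      linarith [hε.2]
  -- conclude
  have hev : ∀ᶠ ε in nhdsWithin (0:ℝ) (Ioi 0), C * c ≤ C *
      ∫ y in {y : EuclideanSpace ℝ (Fin n) | ε < dist y x₀},
        (u x₀ - u y) / dist x₀ y ^ q := by
    filter_upwards [Ioo_mem_nhdsGT_of_mem (by simp : (0:ℝ) ∈ Ico (0:ℝ) 1)] with ε hε
    exact mul_le_mul_of_nonneg_left (hchain ε hε) hC.le
  have hge : C * c ≤ g := ge_of_tendsto hg hev
  exact lt_of_lt_of_le (mul_pos hC hc) hge

private lemma fracLapEq_neg {n : ℕ} {s : ℝ} {u : EuclideanSpace ℝ (Fin n) → ℝ}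
    {x : EuclideanSpace ℝ (Fin n)} {g : ℝ} (h : fracLapEq n s u x g) :
    fracLapEq n s (fun y => -u y) x (-g) := by
  unfold fracLapEq at h ⊢
  have heq : ∀ ε : ℝ, (∫ y in {y : EuclideanSpace ℝ (Fin n) | ε < dist y x},
      ((fun y => -u y) x - (fun y => -u y) y) / dist x y ^ ((n : ℝ) + 2 * s))
      = -∫ y in {y : EuclideanSpace ℝ (Fin n) | ε < dist y x},
      (u x - u y) / dist x y ^ ((n : ℝ) + 2 * s) := by
    intro ε
    rw [← integral_neg]
    congr 1
    funext y
    ring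
  have := h.neg
  simp only [← neg_mul] at this
  convert this using 2 with ε
  rw [heq ε]
  ring


/-- **`L^∞` estimate for the fractional obstacle problem with zero forcing.** If `Ω` is
bounded and open, `ψ` is bounded on `Ω` with `ψ < 0` outside `Ω`, and `u` solves the
fractional obstacle problem with `f = 0`, then
`max(ψ(x), 0) ≤ u(x) ≤ sup_{y ∈ Ω} max(ψ(y), 0)` for every `x ∈ Ω`. -/
theorem Linfty_estimate_obstacle
    (n : ℕ) (hn : 0 < n) (s : ℝ) (hs : s ∈ Set.Ioo (0 : ℝ) 1)
    (Ω : Set (EuclideanSpace ℝ (Fin n)))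
    (hΩo : IsOpen Ω) (hΩb : Bornology.IsBounded Ω)
    (ψ u : EuclideanSpace ℝ (Fin n) → ℝ)
    (hψbdd : ∃ M, ∀ x ∈ Ω, |ψ x| ≤ M)
    (hψneg : ∀ x ∉ Ω, ψ x < 0)
    (hu : SolvesObstacle n s Ω (fun _ => 0) ψ u) :
    ∀ x ∈ Ω, max (ψ x) 0 ≤ u x ∧ u x ≤ sSup ((fun y => max (ψ y) 0) '' Ω) := by
  obtain ⟨⟨M, hM⟩, hcont, hzero, hmin⟩ := hu
  obtain ⟨Mψ, hMψ⟩ := hψbdd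
  intro x hx
  -- basic consequences of the min condition
  have hgnn : ∀ z ∈ Ω, ∃ g, fracLapEq n s u z g ∧ 0 ≤ g ∧ ψ z ≤ u z := by
    intro z hz
    obtain ⟨g, hg, hming⟩ := hmin z hz
    refine ⟨g, hg, ?_, ?_⟩
    · have := min_le_left (g - 0) (u z - ψ z); rw [hming] at this; linarith
    · have := min_le_right (g - 0) (u z - ψ z); rw [hming] at this; linarith
  have hψle : ∀ z ∈ Ω, ψ z ≤ u z := fun z hz => (hgnn z hz).choose_spec.2.2
  -- sSup facts
  set S := sSup ((fun y => max (ψ y) 0) '' Ω) with hSdef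
  have hbdd : BddAbove ((fun y => max (ψ y) 0) '' Ω) := by
    refine ⟨max Mψ 0, ?_⟩
    rintro _ ⟨z, hz, rfl⟩
    exact max_le_max (le_trans (le_abs_self _) (hMψ z hz)) le_rfl
  have hSle : ∀ z ∈ Ω, max (ψ z) 0 ≤ S := fun z hz =>
    le_csSup hbdd (mem_image_of_mem _ hz)
  have hS0 : 0 ≤ S := le_trans (le_max_right _ _) (hSle x hx)
  -- compactness
  have hK : IsCompact (closure Ω) := hΩb.isCompact_closure
  have hKne : (closure Ω).Nonempty := ⟨x, subset_closure hx⟩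
  constructor
  · -- lower bound
    obtain ⟨z₁, hz₁K, hz₁min⟩ := hK.exists_isMinOn hKne hcont.continuousOn
    rcases le_or_gt 0 (u z₁) with h | h
    · exact max_le (hψle x hx) (le_trans h (hz₁min (subset_closure hx)))
    · exfalso
      have hz₁Ω : z₁ ∈ Ω := by
        by_contra hc
        rw [hzero z₁ hc] at h
        exact lt_irrefl _ h
      have hgmin : ∀ y, u z₁ ≤ u y := by
        intro y
        by_cases hy : y ∈ Ω
        · exact hz₁min (subset_closure hy)
        · rw [hzero y hy]; linarith
      obtain ⟨g, hg, hg0, _⟩ := hgnn z₁ hz₁Ω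
      have hkey := key_lemma n hn hs Ω hΩb (fun y => -u y) M
        (fun y => by rw [abs_neg]; exact hM y)
        hcont.neg (fun y hy => by simp [hzero y hy]) z₁
        (fun y => neg_le_neg (hgmin y)) (by simpa using h) (fracLapEq_neg hg)
      linarith
  · -- upper bound
    obtain ⟨z₀, hz₀K, hz₀max⟩ := hK.exists_isMaxOn hKne hcont.continuousOn
    rcases le_or_gt (u z₀) S with h | h
    · exact le_trans (hz₀max (subset_closure hx)) h
    · exfalso
      have hz₀pos : 0 < u z₀ := lt_of_le_of_lt hS0 h
      have hz₀Ω : z₀ ∈ Ω := by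
        by_contra hc
        rw [hzero z₀ hc] at hz₀pos
        exact lt_irrefl _ hz₀pos
      have hgmax : ∀ y, u y ≤ u z₀ := by
        intro y
        by_cases hy : y ∈ Ω
        · exact hz₀max (subset_closure hy)
        · rw [hzero y hy]; exact hz₀pos.le
      obtain ⟨g, hg, hming⟩ := hmin z₀ hz₀Ω
      have hψS : ψ z₀ ≤ S := le_trans (le_max_left _ _) (hSle z₀ hz₀Ω)
      have hbpos : 0 < u z₀ - ψ z₀ := by linarith
      have hgz : g = 0 := by
        rcases min_eq_iff.mp hming with ⟨h1, _⟩ | ⟨h1, _⟩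
        · have : g - (0:ℝ) = 0 := by simpa using h1
          linarith
        · linarith
      have hkey := key_lemma n hn hs Ω hΩb u M hM hcont hzero z₀ hgmax hz₀pos hg
      linarith
end
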